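/- Let T₁, …, Tₙ be bounded linear operators on a complex Hilbert space H. Then ‖∑_{k=1}^n T_k‖² ≤ (max_{j=1,…,n} ∑_{k=1}^n √‖T_j* T_k‖) · (max_{j=1,…,n} ∑_{k=1}^n √‖T_j T_k*‖), where ‖·‖ denotes the operator norm and T* denotes the Hilbert-space adjoint. -/

import Mathlib

/-!
Write `S = ∑ k, T k`. By the C⋆-identity, `‖S‖ ^ (2N) = ‖(S⋆ S) ^ N‖` for `N = 2 ^ t`, and
`(S⋆ S) ^ N` expands into the words `T j₁⋆ T k₁ ⋯ T j_N⋆ T k_N`. Each word is bounded by the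
geometric mean of the two products of norms coming from the groupings
`(T j₁⋆ T k₁) ⋯ (T j_N⋆ T k_N)` and `T j₁⋆ (T k₁ T j₂⋆) ⋯ (T k_{N-1} T j_N⋆) T k_N`. These geometric
means can be summed one index at a time against the row sums `A` and `B`, which gives
`‖S‖ ^ (2N) ≤ C (A B) ^ (N - 1)` with `C` independent of `N`; letting `N → ∞` yields `‖S‖² ≤ A B`.
-/

open ContinuousLinearMap Filter

lemma Fintype.sum_fun_fin_succ {β M : Type*} [Fintype β] [AddCommMonoid M] (m : ℕ)
    (F : (Fin (m + 1) → β) → M) :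
    ∑ g, F g = ∑ p, ∑ g : Fin m → β, F (Fin.cons p g) := by
  rw [← (Fin.consEquiv fun _ ↦ β).sum_comp, Fintype.sum_prod_type]
  rfl

lemma sum_pow_eq_sum_prod_ofFn {R κ : Type*} [Semiring R] [Fintype κ] (f : κ → R) (m : ℕ) :
    (∑ i, f i) ^ m = ∑ w : Fin m → κ, (List.ofFn fun i ↦ f (w i)).prod := by
  induction m with
  | zero => simp
  | succ m ih =>
    rw [pow_succ', ih, Finset.sum_mul_sum, Fintype.sum_fun_fin_succ]
    simp [List.ofFn_succ]

lemma le_of_frequently_pow_succ_le_mul_pow {x y C : ℝ} (hy : 0 ≤ y)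
    (h : ∃ᶠ m in atTop, x ^ (m + 1) ≤ C * y ^ m) : x ≤ y := by
  by_contra! hyx
  have hx : 0 < x := hy.trans_lt hyx
  have hsmall : ∀ᶠ m in atTop, C * (y / x) ^ m < x := by
    have := (tendsto_pow_atTop_nhds_zero_of_lt_one (div_nonneg hy hx.le)
      ((div_lt_one hx).2 hyx)).const_mul C
    rw [mul_zero] at this
    exact this.eventually (gt_mem_nhds hx)
  obtain ⟨m, hm, hlt⟩ := (h.and_eventually hsmall).exists
  have : x ≤ C * (y / x) ^ m := by
    rwa [div_pow, ← mul_div_assoc, le_div_iff₀ (pow_pos hx m), ← pow_succ']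
  exact this.not_gt hlt

namespace CotlarStein

variable {E ι : Type*} [NormedRing E] [StarRing E] (T : ι → E)

def word (w : List (ι × ι)) : E :=
  (w.map fun p ↦ star (T p.1) * T p.2).prod

def pairNormProd (w : List (ι × ι)) : ℝ :=
  (w.map fun p ↦ ‖star (T p.1) * T p.2‖).prod

def chainNorm : ι → List (ι × ι) → ℝ
  | k, [] => ‖T k‖
  | k, q :: w => ‖T k * star (T q.1)‖ * chainNorm q.2 w

/-- This is `√(chainNorm T k w * pairNormProd T w)` (see `chainWeight_sq`), written as a product
of square roots so that sums of it over words factor one index at a time. -/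
noncomputable def chainWeight : ι → List (ι × ι) → ℝ
  | k, [] => √‖T k‖
  | k, q :: w => √‖T k * star (T q.1)‖ * √‖star (T q.1) * T q.2‖ * chainWeight q.2 w

lemma chainWeight_nonneg : ∀ (k : ι) (w : List (ι × ι)), 0 ≤ chainWeight T k w
  | _, [] => Real.sqrt_nonneg _
  | _, q :: w => mul_nonneg (by positivity) (chainWeight_nonneg q.2 w)

lemma chainWeight_sq : ∀ (k : ι) (w : List (ι × ι)),
    chainWeight T k w ^ 2 = chainNorm T k w * pairNormProd T w
  | _, [] => by simp [chainWeight, chainNorm, pairNormProd]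
  | k, q :: w => by
    simp only [chainWeight, chainNorm, pairNormProd, List.map_cons, List.prod_cons]
    rw [mul_pow, mul_pow, chainWeight_sq q.2 w, Real.sq_sqrt (norm_nonneg _),
      Real.sq_sqrt (norm_nonneg _), pairNormProd]
    ring

lemma norm_word_cons_le_pairNormProd (p : ι × ι) (w : List (ι × ι)) :
    ‖word T (p :: w)‖ ≤ pairNormProd T (p :: w) := by
  simpa [word, pairNormProd, List.map_map, Function.comp_def] using
    List.norm_prod_le' (List.cons_ne_nil (star (T p.1) * T p.2) (w.map _))

lemma norm_mul_word_le_chainNorm : ∀ (k : ι) (w : List (ι × ι)),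
    ‖T k * word T w‖ ≤ chainNorm T k w
  | k, [] => by simp [word, chainNorm]
  | k, q :: w => by
    have : T k * word T (q :: w) = T k * star (T q.1) * (T q.2 * word T w) := by
      simp [word, mul_assoc]
    rw [this, chainNorm]
    exact (norm_mul_le _ _).trans (by gcongr; exact norm_mul_word_le_chainNorm q.2 w)

lemma star_sum_mul_sum_pow_succ_eq_sum_word [Fintype ι] (m : ℕ) :
    (star (∑ k, T k) * ∑ k, T k) ^ (m + 1) =
      ∑ p : ι × ι, ∑ w : Fin m → ι × ι, word T (p :: List.ofFn w) := by
  rw [star_sum, Finset.sum_mul_sum, ← Fintype.sum_prod_type', sum_pow_eq_sum_prod_ofFn,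
    Fintype.sum_fun_fin_succ]
  simp [word, List.ofFn_succ, List.map_ofFn, Function.comp_def]

variable [CStarRing E]

lemma norm_word_cons_le_chainNorm (p : ι × ι) (w : List (ι × ι)) :
    ‖word T (p :: w)‖ ≤ ‖T p.1‖ * chainNorm T p.2 w := by
  have : word T (p :: w) = star (T p.1) * (T p.2 * word T w) := by simp [word, mul_assoc]
  rw [this, ← norm_star (T p.1)]
  exact (norm_mul_le _ _).trans (by gcongr; exact norm_mul_word_le_chainNorm T p.2 w)

lemma norm_word_cons_le (p : ι × ι) (w : List (ι × ι)) :
    ‖word T (p :: w)‖ ≤ √‖T p.1‖ * √‖star (T p.1) * T p.2‖ * chainWeight T p.2 w := by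
  refine (pow_le_pow_iff_left₀ (norm_nonneg _)
    (mul_nonneg (by positivity) (chainWeight_nonneg T _ _)) two_ne_zero).1 ?_
  calc ‖word T (p :: w)‖ ^ 2
      ≤ pairNormProd T (p :: w) * (‖T p.1‖ * chainNorm T p.2 w) := by
        rw [sq]
        exact mul_le_mul (norm_word_cons_le_pairNormProd T p w)
          (norm_word_cons_le_chainNorm T p w) (norm_nonneg _)
          ((norm_nonneg _).trans (norm_word_cons_le_pairNormProd T p w))
    _ = (√‖T p.1‖ * √‖star (T p.1) * T p.2‖ * chainWeight T p.2 w) ^ 2 := by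
        rw [mul_pow, mul_pow, chainWeight_sq, Real.sq_sqrt (norm_nonneg _),
          Real.sq_sqrt (norm_nonneg _), pairNormProd, List.map_cons, List.prod_cons, pairNormProd]
        ring

variable {T} [Fintype ι] {A B : ℝ}

lemma norm_le_of_sum_sqrt_norm_le (hA : ∀ j, ∑ k, √‖star (T j) * T k‖ ≤ A) (j : ι) :
    ‖T j‖ ≤ A :=
  calc ‖T j‖ = √‖star (T j) * T j‖ := by
        rw [CStarRing.norm_star_mul_self, Real.sqrt_mul_self (norm_nonneg _)]
    _ ≤ ∑ k, √‖star (T j) * T k‖ :=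
        Finset.single_le_sum (f := fun k ↦ √‖star (T j) * T k‖)
          (fun k _ ↦ Real.sqrt_nonneg _) (Finset.mem_univ j)
    _ ≤ A := hA j

lemma sum_chainWeight_le (hA : ∀ j, ∑ k, √‖star (T j) * T k‖ ≤ A)
    (hB : ∀ j, ∑ k, √‖T j * star (T k)‖ ≤ B) (m : ℕ) (k : ι) :
    ∑ w : Fin m → ι × ι, chainWeight T k (List.ofFn w) ≤ √A * (B * A) ^ m := by
  induction m generalizing k with
  | zero => simpa [chainWeight] using Real.sqrt_le_sqrt (norm_le_of_sum_sqrt_norm_le hA k)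
  | succ m ih =>
    have hA₀ : 0 ≤ A := (norm_nonneg _).trans (norm_le_of_sum_sqrt_norm_le hA k)
    have hB₀ : 0 ≤ B := (Finset.sum_nonneg fun _ _ ↦ Real.sqrt_nonneg _).trans (hB k)
    calc ∑ w : Fin (m + 1) → ι × ι, chainWeight T k (List.ofFn w)
        = ∑ j, √‖T k * star (T j)‖ * ∑ l, √‖star (T j) * T l‖ *
            ∑ w : Fin m → ι × ι, chainWeight T l (List.ofFn w) := by
          rw [Fintype.sum_fun_fin_succ, Fintype.sum_prod_type]
          simp [chainWeight, Finset.mul_sum, mul_assoc]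
      _ ≤ ∑ j, √‖T k * star (T j)‖ * ∑ l, √‖star (T j) * T l‖ * (√A * (B * A) ^ m) := by
          gcongr with j _ l _
          exact ih l
      _ ≤ ∑ j, √‖T k * star (T j)‖ * (A * (√A * (B * A) ^ m)) := by
          gcongr with j
          rw [← Finset.sum_mul]
          exact mul_le_mul_of_nonneg_right (hA j) (by positivity)
      _ ≤ B * (A * (√A * (B * A) ^ m)) := by
          rw [← Finset.sum_mul]
          exact mul_le_mul_of_nonneg_right (hB k) (by positivity)
      _ = √A * (B * A) ^ (m + 1) := by ring

lemma norm_star_sum_mul_sum_pow_succ_le (hA₀ : 0 ≤ A)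
    (hA : ∀ j, ∑ k, √‖star (T j) * T k‖ ≤ A) (hB : ∀ j, ∑ k, √‖T j * star (T k)‖ ≤ B)
    (m : ℕ) :
    ‖(star (∑ k, T k) * ∑ k, T k) ^ (m + 1)‖ ≤ Fintype.card ι * A ^ 2 * (B * A) ^ m := by
  rw [star_sum_mul_sum_pow_succ_eq_sum_word]
  calc ‖∑ p : ι × ι, ∑ w : Fin m → ι × ι, word T (p :: List.ofFn w)‖
      ≤ ∑ p : ι × ι, ∑ w : Fin m → ι × ι,
          √‖T p.1‖ * √‖star (T p.1) * T p.2‖ * chainWeight T p.2 (List.ofFn w) := by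
        refine (norm_sum_le _ _).trans (Finset.sum_le_sum fun p _ ↦ ?_)
        exact (norm_sum_le _ _).trans (Finset.sum_le_sum fun w _ ↦ norm_word_cons_le T p _)
    _ ≤ ∑ p : ι × ι, √‖T p.1‖ * √‖star (T p.1) * T p.2‖ * (√A * (B * A) ^ m) := by
        gcongr with p
        rw [← Finset.mul_sum]
        gcongr
        exact sum_chainWeight_le hA hB m p.2
    _ ≤ ∑ _j : ι, √A * A * (√A * (B * A) ^ m) := by
        rw [Fintype.sum_prod_type]
        gcongr with j
        have hB₀ : 0 ≤ B := (Finset.sum_nonneg fun _ _ ↦ Real.sqrt_nonneg _).trans (hB j)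
        dsimp only
        rw [← Finset.sum_mul, ← Finset.mul_sum]
        gcongr
        · exact norm_le_of_sum_sqrt_norm_le hA j
        · exact hA j
    _ = Fintype.card ι * A ^ 2 * (B * A) ^ m := by
        rw [Finset.sum_const, Finset.card_univ, nsmul_eq_mul]
        linear_combination (Fintype.card ι * A * (B * A) ^ m) * Real.mul_self_sqrt hA₀

theorem norm_sum_sq_le_of_sum_sqrt_norm_le (hA₀ : 0 ≤ A) (hB₀ : 0 ≤ B)
    (hA : ∀ j, ∑ k, √‖star (T j) * T k‖ ≤ A) (hB : ∀ j, ∑ k, √‖T j * star (T k)‖ ≤ B) :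
    ‖∑ k, T k‖ ^ 2 ≤ A * B := by
  have hpow (t : ℕ) :
      (‖∑ k, T k‖ ^ 2) ^ (2 ^ t - 1 + 1) ≤ Fintype.card ι * A ^ 2 * (B * A) ^ (2 ^ t - 1) := by
    rw [Nat.sub_add_cancel Nat.one_le_two_pow, sq, ← CStarRing.norm_star_mul_self,
      ← (IsSelfAdjoint.star_mul_self _).norm_pow_two_pow, ← Nat.sub_add_cancel Nat.one_le_two_pow]
    exact norm_star_sum_mul_sum_pow_succ_le hA₀ hA hB _
  rw [mul_comm]
  refine le_of_frequently_pow_succ_le_mul_pow (mul_nonneg hB₀ hA₀)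
    (frequently_atTop.2 fun N ↦ ⟨2 ^ N - 1, ?_, hpow N⟩)
  have := Nat.lt_two_pow_self (n := N)
  omega

end CotlarStein

theorem cotlar_stein {H : Type*} [NormedAddCommGroup H] [InnerProductSpace ℂ H]
    [CompleteSpace H] {n : ℕ} (T : Fin n → (H →L[ℂ] H)) :
    ‖∑ k, T k‖ ^ 2 ≤
      (⨆ j, ∑ k, Real.sqrt ‖adjoint (T j) * T k‖) *
        (⨆ j, ∑ k, Real.sqrt ‖T j * adjoint (T k)‖) := by
  simp only [← star_eq_adjoint]
  exact CotlarStein.norm_sum_sq_le_of_sum_sqrt_norm_le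
    (Real.iSup_nonneg fun _ ↦ Finset.sum_nonneg fun _ _ ↦ Real.sqrt_nonneg _)
    (Real.iSup_nonneg fun _ ↦ Finset.sum_nonneg fun _ _ ↦ Real.sqrt_nonneg _)
    (le_ciSup (Set.finite_range _).bddAbove) (le_ciSup (Set.finite_range _).bddAbove)
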